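/- Let φ: G → G be an endomorphism of a group G and N its subgroup of φ-nilpotent elements. Two elements x, y ∈ G are φ-conjugate if and only if xN and yN are [φ/N]-conjugate in G/N. Consequently the projection induces a bijection between φ-conjugacy classes of G and [φ/N]-conjugacy classes of G/N, so R(φ) = R([φ/N]). -/

import Mathlib

/-!
If `n` is φ-nilpotent then `x * n` is φ-conjugate to `x * φ (x n x⁻¹)`, and `φ (x n x⁻¹)` dies
one iterate sooner than `n`; by induction every coset `x N` lies in a single φ-conjugacy class,
so φ-conjugacy in `G` is pulled back from `[φ/N]`-conjugacy in `G/N`.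
-/

noncomputable def Quot.equivOfSurjective {α β : Type*} {r : α → α → Prop} {s : β → β → Prop}
    (hs : Equivalence s) {f : α → β} (hf : f.Surjective) (h : ∀ a b, r a b ↔ s (f a) (f b)) :
    Quot r ≃ Quot s :=
  Equiv.ofBijective (Quot.map f fun a b => (h a b).1)
    ⟨by
      rintro ⟨a⟩ ⟨b⟩ hab
      exact Quot.sound <| (h a b).2 <| hs.eqvGen_iff.1 <| Quot.eqvGen_exact hab,
    Quot.map_surjective _ hf⟩

def TwistedConj {G : Type*} [Group G] (φ : G →* G) (x y : G) : Prop :=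
  ∃ g : G, y = g * x * (φ g)⁻¹

namespace TwistedConj

variable {G H : Type*} [Group G] [Group H] {φ : G →* G} {x y z : G}

theorem refl (x : G) : TwistedConj φ x x :=
  ⟨1, by simp⟩

theorem symm : TwistedConj φ x y → TwistedConj φ y x := by
  rintro ⟨g, rfl⟩
  exact ⟨g⁻¹, by simp [mul_assoc]⟩

theorem trans : TwistedConj φ x y → TwistedConj φ y z → TwistedConj φ x z := by
  rintro ⟨g, rfl⟩ ⟨h, rfl⟩
  exact ⟨h * g, by simp [mul_assoc]⟩

theorem equivalence : Equivalence (TwistedConj φ) :=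
  ⟨refl, symm, trans⟩

theorem map {ψ : H →* H} (f : G →* H) (hf : ∀ x, ψ (f x) = f (φ x)) :
    TwistedConj φ x y → TwistedConj ψ (f x) (f y) := by
  rintro ⟨g, rfl⟩
  exact ⟨f g, by simp [hf]⟩

theorem mul_right_of_iterate_eq_one {k : ℕ} {n : G} (hn : φ^[k] n = 1) (x : G) :
    TwistedConj φ x (x * n) := by
  induction k generalizing n with
  | zero => simpa [show n = 1 from hn] using refl x
  | succ k ih =>
    have hm : φ^[k] (φ (x * n * x⁻¹)) = 1 := by
      rw [← Function.iterate_succ_apply, iterate_map_mul, iterate_map_mul, hn]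
      simp
    have hstep : TwistedConj φ (x * n) (x * φ (x * n * x⁻¹)) :=
      ⟨(x * n * x⁻¹)⁻¹, by simp [mul_assoc]⟩
    exact (ih hm).trans hstep.symm

theorem exists_of_mk {N : Subgroup G} [N.Normal] {ψ : G ⧸ N →* G ⧸ N}
    (hψ : ∀ x : G, ψ x = φ x) (h : TwistedConj ψ (x : G ⧸ N) y) :
    ∃ z, TwistedConj φ x z ∧ z⁻¹ * y ∈ N := by
  obtain ⟨g, hg⟩ := h
  obtain ⟨g, rfl⟩ := QuotientGroup.mk_surjective g
  refine ⟨g * x * (φ g)⁻¹, ⟨g, rfl⟩, QuotientGroup.eq.1 ?_⟩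
  rw [hg, hψ]
  rfl

theorem mk_iff {N : Subgroup G} [N.Normal] (hN : (N : Set G) ⊆ {n | ∃ k, φ^[k] n = 1})
    {ψ : G ⧸ N →* G ⧸ N} (hψ : ∀ x : G, ψ x = φ x) :
    TwistedConj ψ (x : G ⧸ N) y ↔ TwistedConj φ x y := by
  refine ⟨fun h => ?_, map (QuotientGroup.mk' N) hψ⟩
  obtain ⟨z, hxz, hzy⟩ := exists_of_mk hψ h
  obtain ⟨k, hk⟩ := hN hzy
  simpa using hxz.trans (mul_right_of_iterate_eq_one hk z)

end TwistedConj

/-- Twisted conjugacy descends to the quotient by the subgroup `N` of φ-nilpotent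
elements: `x, y` are φ-conjugate iff `xN, yN` are `[φ/N]`-conjugate, and the projection
induces a bijection between the φ-conjugacy classes of `G` and the `[φ/N]`-conjugacy
classes of `G/N`, so `R(φ) = R([φ/N])`. -/
theorem reidemeister_quotient_nilpotent {G : Type*} [Group G] (φ : G →* G)
    (N : Subgroup G) [N.Normal]
    (hN : (N : Set G) = {x : G | ∃ n : ℕ, (⇑φ)^[n] x = 1})
    (ψ : G ⧸ N →* G ⧸ N)
    (hψ : ∀ x : G, ψ (QuotientGroup.mk x) = QuotientGroup.mk (φ x)) :
    (∀ x y : G, (∃ g : G, y = g * x * (φ g)⁻¹) ↔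
      (∃ g : G ⧸ N, (QuotientGroup.mk y : G ⧸ N) = g * QuotientGroup.mk x * (ψ g)⁻¹)) ∧
    ∃ e : Quot (fun x y : G => ∃ g : G, y = g * x * (φ g)⁻¹) ≃
          Quot (fun x y : G ⧸ N => ∃ g : G ⧸ N, y = g * x * (ψ g)⁻¹),
      ∀ x : G, e (Quot.mk _ x) = Quot.mk _ (QuotientGroup.mk x : G ⧸ N) := by
  have hconj (x y : G) : TwistedConj φ x y ↔ TwistedConj ψ (x : G ⧸ N) y :=
    (TwistedConj.mk_iff hN.subset hψ).symm
  exact ⟨hconj, Quot.equivOfSurjective TwistedConj.equivalence QuotientGroup.mk_surjective hconj,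
    fun _ => rfl⟩
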